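/- Let a ≠ b be actions, N > 1, and p_N = Σ_{i=1}^N b^i.a (where b^0 a = a.0 and b^{i+1}a = b.(b^i a)). If p and q are closed BCCSP_par processes that are not trace equivalent to 0 and p ‖ q is possible-futures equivalent to a.0 ‖ p_N, then either (p is possible-futures equivalent to a.0 and q is possible-futures equivalent to p_N) or (p is possible-futures equivalent to p_N and q is possible-futures equivalent to a.0). -/

import Mathlib

inductive Proc (A : Type) : Type where
  | nil : Proc A
  | pre : A → Proc A → Proc A
  | add : Proc A → Proc A → Proc A
  | par : Proc A → Proc A → Proc A

inductive Step {A : Type} : Proc A → A → Proc A → Prop where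
  | pre (a : A) (p : Proc A) : Step (.pre a p) a p
  | addL {p : Proc A} {a : A} {p' : Proc A} (q : Proc A) :
      Step p a p' → Step (.add p q) a p'
  | addR {q : Proc A} {a : A} {q' : Proc A} (p : Proc A) :
      Step q a q' → Step (.add p q) a q'
  | parL {p : Proc A} {a : A} {p' : Proc A} (q : Proc A) :
      Step p a p' → Step (.par p q) a (.par p' q)
  | parR {q : Proc A} {a : A} {q' : Proc A} (p : Proc A) :
      Step q a q' → Step (.par p q) a (.par p q')

inductive TraceTo {A : Type} : Proc A → List A → Proc A → Prop where
  | refl (p : Proc A) : TraceTo p [] p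
  | step {p : Proc A} {a : A} {p' : Proc A} {α : List A} {q : Proc A} :
      Step p a p' → TraceTo p' α q → TraceTo p (a :: α) q

def traces {A : Type} (p : Proc A) : Set (List A) := {α | ∃ q, TraceTo p α q}

def stuck {A : Type} (p : Proc A) : Prop := ∀ (a : A) (q : Proc A), ¬ Step p a q

def ctraces {A : Type} (p : Proc A) : Set (List A) :=
  {α | ∃ q, TraceTo p α q ∧ stuck q}

def initials {A : Type} (p : Proc A) : Set A := {a | ∃ p', Step p a p'}

def IsSimulation {A : Type} (R : Proc A → Proc A → Prop) : Prop :=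
  ∀ p q, R p q → ∀ (a : A) (p' : Proc A), Step p a p' → ∃ q', Step q a q' ∧ R p' q'

def SimEquiv {A : Type} (p q : Proc A) : Prop :=
  (∃ R, IsSimulation R ∧ R p q) ∧ (∃ R, IsSimulation R ∧ R q p)

def IsReadySimulation {A : Type} (R : Proc A → Proc A → Prop) : Prop :=
  IsSimulation R ∧ ∀ p q, R p q → initials p = initials q

def RSEquiv {A : Type} (p q : Proc A) : Prop :=
  (∃ R, IsReadySimulation R ∧ R p q) ∧ (∃ R, IsReadySimulation R ∧ R q p)

def IsCompletedSimulation {A : Type} (R : Proc A → Proc A → Prop) : Prop :=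
  IsSimulation R ∧ ∀ p q, R p q → stuck p → stuck q

def CSEquiv {A : Type} (p q : Proc A) : Prop :=
  (∃ R, IsCompletedSimulation R ∧ R p q) ∧ (∃ R, IsCompletedSimulation R ∧ R q p)

def Bisim {A : Type} (p q : Proc A) : Prop :=
  ∃ R, (∀ x y, R x y → R y x) ∧ IsSimulation R ∧ R p q

noncomputable def depth {A : Type} (p : Proc A) : ℕ :=
  sSup (List.length '' ctraces p)

noncomputable def norm {A : Type} (p : Proc A) : ℕ :=
  sInf (List.length '' ctraces p)

/-- The set of possible futures of a process. -/
def possibleFutures {A : Type} (p : Proc A) : Set (List A × Set (List A)) :=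
  {x | ∃ p', TraceTo p x.1 p' ∧ x.2 = traces p'}

def PFEquiv {A : Type} (p q : Proc A) : Prop :=
  possibleFutures p = possibleFutures q

/-- `bpow a b i` is the process `b^i a`, i.e. `i` `b`-prefixes followed by `a.0`. -/
def bpow {A : Type} (a b : A) : ℕ → Proc A
  | 0 => Proc.pre a Proc.nil
  | i + 1 => Proc.pre b (bpow a b i)

def listSum {A : Type} : List (Proc A) → Proc A
  | [] => Proc.nil
  | t :: ts => Proc.add t (listSum ts)

/-- `pN a b N` is `Σ_{i=1}^N b^i a`. -/
def pN {A : Type} (a b : A) (N : ℕ) : Proc A :=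
  listSum ((List.range N).map fun i => bpow a b (i + 1))

/-- A process is "equivalent to 0" when it has the same traces as `0`. -/
def NilEquiv {A : Type} (p : Proc A) : Prop := traces p = traces (Proc.nil : Proc A)

/-- No subterm is a sum or a parallel composition with a 0-equivalent argument. -/
def noNilSummandFactor {A : Type} : Proc A → Prop
  | Proc.nil => True
  | Proc.pre _ p => noNilSummandFactor p
  | Proc.add p q =>
      noNilSummandFactor p ∧ noNilSummandFactor q ∧ ¬ NilEquiv p ∧ ¬ NilEquiv q
  | Proc.par p q =>
      noNilSummandFactor p ∧ noNilSummandFactor q ∧ ¬ NilEquiv p ∧ ¬ NilEquiv q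

/-!
Some factor must perform the initial `a` of `a.0 ‖ p_N`; say `p` does (the other case is
symmetric). Matching futures, `traces (p' ‖ q) = traces p_N` for every `a`-derivative `p'` of `p`.
Since `q` is not stuck and `p_N` is not the trace set of two non-stuck factors, each such `p'` is
stuck, hence `traces q = traces p_N`. A step of `p` by another letter would have to be matched by a
step of `p_N` to some `b^m a` with `m < N`, whose traces do not contain `b^N ∈ traces q`; so `p`
only performs one `a` and stops, i.e. `p ≈ a.0`. Finally, along an `a`-free trace of `q` the
futures of `p ‖ q` and `a.0 ‖ p_N` are matched as `p ‖ r` against `a.0 ‖ b^k a`, and a factor with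
the traces of `a.0` cancels against `b^k a`, so `q ≈ p_N`.
-/

open Proc

section Traces

variable {A : Type} {a c : A} {p q r x y : Proc A} {w σ τ : List A}

theorem TraceTo.eq_of_nil (h : TraceTo p [] r) : r = p := by
  cases h; rfl

theorem traceTo_cons_iff : TraceTo p (c :: w) r ↔ ∃ p', Step p c p' ∧ TraceTo p' w r :=
  ⟨fun h => by cases h with | step s t => exact ⟨_, s, t⟩, fun ⟨_, s, t⟩ => .step s t⟩

theorem traceTo_singleton_iff : TraceTo p [c] r ↔ Step p c r := by
  rw [traceTo_cons_iff]
  exact ⟨fun ⟨_, s, t⟩ => t.eq_of_nil ▸ s, fun s => ⟨r, s, .refl r⟩⟩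

theorem TraceTo.append (h₁ : TraceTo p σ q) (h₂ : TraceTo q τ r) : TraceTo p (σ ++ τ) r := by
  induction h₁ with
  | refl => exact h₂
  | step s _ ih => exact .step s (ih h₂)

theorem TraceTo.exists_of_append (h : TraceTo p (σ ++ τ) r) :
    ∃ q, TraceTo p σ q ∧ TraceTo q τ r := by
  induction σ generalizing p with
  | nil => exact ⟨p, .refl p, h⟩
  | cons c σ ih =>
    obtain ⟨p', s, t⟩ := traceTo_cons_iff.mp h
    obtain ⟨q, h₁, h₂⟩ := ih t
    exact ⟨q, .step s h₁, h₂⟩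

theorem TraceTo.eq_of_stuck (hp : stuck p) (h : TraceTo p w r) : w = [] ∧ r = p := by
  cases h with
  | refl => exact ⟨rfl, rfl⟩
  | step s _ => exact absurd s (hp _ _)

theorem stuck_nil : stuck (nil : Proc A) :=
  fun _ _ h => nomatch h

theorem step_pre_iff : Step (pre a x) c y ↔ c = a ∧ y = x :=
  ⟨fun h => by cases h; exact ⟨rfl, rfl⟩, by rintro ⟨rfl, rfl⟩; exact .pre _ _⟩

theorem nil_mem_traces (p : Proc A) : [] ∈ traces p := ⟨p, .refl p⟩

theorem cons_mem_traces_iff : c :: w ∈ traces p ↔ ∃ p', Step p c p' ∧ w ∈ traces p' :=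
  ⟨fun ⟨_, h⟩ => let ⟨p', s, t⟩ := traceTo_cons_iff.mp h; ⟨p', s, _, t⟩,
    fun ⟨_, s, _, t⟩ => ⟨_, .step s t⟩⟩

theorem mem_traces_of_prefix (hw : w <+: σ) (hσ : σ ∈ traces p) : w ∈ traces p := by
  obtain ⟨τ, rfl⟩ := hw
  obtain ⟨r, hr⟩ := hσ
  obtain ⟨q, hq, -⟩ := hr.exists_of_append
  exact ⟨q, hq⟩

theorem traces_eq_of_stuck (hp : stuck p) : traces p = {[]} := by
  ext w
  refine ⟨fun ⟨r, hr⟩ => (hr.eq_of_stuck hp).1, ?_⟩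
  rintro rfl
  exact nil_mem_traces p

theorem nilEquiv_of_stuck (hp : stuck p) : NilEquiv p := by
  rw [NilEquiv, traces_eq_of_stuck hp, traces_eq_of_stuck stuck_nil]

theorem mem_traces_pre : w ∈ traces (pre c x) ↔ w = [] ∨ ∃ w', w = c :: w' ∧ w' ∈ traces x := by
  cases w with
  | nil => simp [nil_mem_traces]
  | cons d w => simp [cons_mem_traces_iff, step_pre_iff, and_comm]

theorem mem_traces_pre_nil : w ∈ traces (pre a nil) ↔ w = [] ∨ w = [a] := by
  simp [mem_traces_pre, traces_eq_of_stuck stuck_nil]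

theorem traces_eq_singleton_nil_of_maximal (hr : TraceTo p w r)
    (hmax : ∀ σ, w ++ σ ∈ traces p → σ = []) : traces r = {[]} := by
  ext σ
  refine ⟨fun ⟨r', hr'⟩ => hmax σ ⟨r', hr.append hr'⟩, ?_⟩
  rintro rfl
  exact nil_mem_traces r

end Traces

inductive Interleave {A : Type} : List A → List A → List A → Prop
  | nil : Interleave [] [] []
  | left (c : A) {σ τ w : List A} : Interleave σ τ w → Interleave (c :: σ) τ (c :: w)
  | right (c : A) {σ τ w : List A} : Interleave σ τ w → Interleave σ (c :: τ) (c :: w)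

namespace Interleave

variable {A : Type} {σ τ w : List A}

theorem symm (h : Interleave σ τ w) : Interleave τ σ w := by
  induction h with
  | nil => exact .nil
  | left c _ ih => exact .right c ih
  | right c _ ih => exact .left c ih

theorem perm (h : Interleave σ τ w) : (σ ++ τ).Perm w := by
  induction h with
  | nil => exact .nil
  | left c _ ih => exact ih.cons c
  | right c _ ih => exact List.perm_middle.trans (ih.cons c)

theorem eq_of_nil_left (h : Interleave [] τ w) : w = τ := by
  induction τ generalizing w with
  | nil => cases h; rfl
  | cons c τ ih => cases h with
    | right _ h => rw [ih h]

theorem eq_of_nil_right (h : Interleave σ [] w) : w = σ :=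
  h.symm.eq_of_nil_left

end Interleave

section Parallel

variable {A : Type} {a : A} {p q r x y : Proc A} {w σ τ : List A}

theorem traceTo_parL (y : Proc A) {x' : Proc A} (h : TraceTo x σ x') :
    TraceTo (par x y) σ (par x' y) := by
  induction h with
  | refl => exact .refl _
  | step s _ ih => exact .step (.parL y s) ih

theorem traceTo_parR (x : Proc A) {y' : Proc A} (h : TraceTo y τ y') :
    TraceTo (par x y) τ (par x y') := by
  induction h with
  | refl => exact .refl _
  | step s _ ih => exact .step (.parR x s) ih

theorem traceTo_par_of_interleave {x' y' : Proc A} (hi : Interleave σ τ w)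
    (hx : TraceTo x σ x') (hy : TraceTo y τ y') : TraceTo (par x y) w (par x' y') := by
  induction hi generalizing x y with
  | nil => rw [hx.eq_of_nil, hy.eq_of_nil]; exact .refl _
  | left c _ ih =>
    obtain ⟨_, s, t⟩ := traceTo_cons_iff.mp hx
    exact .step (.parL _ s) (ih t hy)
  | right c _ ih =>
    obtain ⟨_, s, t⟩ := traceTo_cons_iff.mp hy
    exact .step (.parR _ s) (ih hx t)

theorem TraceTo.exists_of_par (h : TraceTo (par x y) w r) :
    ∃ x' y' σ τ, r = par x' y' ∧ TraceTo x σ x' ∧ TraceTo y τ y' ∧ Interleave σ τ w := by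
  induction w generalizing x y with
  | nil => exact ⟨x, y, [], [], h.eq_of_nil, .refl x, .refl y, .nil⟩
  | cons c w ih =>
    obtain ⟨_, s, t⟩ := traceTo_cons_iff.mp h
    cases s with
    | parL _ s =>
      obtain ⟨x', y', σ, τ, rfl, hx, hy, hi⟩ := ih t
      exact ⟨x', y', c :: σ, τ, rfl, .step s hx, hy, .left c hi⟩
    | parR _ s =>
      obtain ⟨x', y', σ, τ, rfl, hx, hy, hi⟩ := ih t
      exact ⟨x', y', σ, c :: τ, rfl, hx, .step s hy, .right c hi⟩

theorem mem_traces_par :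
    w ∈ traces (par x y) ↔ ∃ σ ∈ traces x, ∃ τ ∈ traces y, Interleave σ τ w := by
  refine ⟨fun ⟨r, hr⟩ => ?_, fun ⟨σ, ⟨x', hx⟩, τ, ⟨y', hy⟩, hi⟩ =>
    ⟨_, traceTo_par_of_interleave hi hx hy⟩⟩
  obtain ⟨x', y', σ, τ, -, hx, hy, hi⟩ := hr.exists_of_par
  exact ⟨σ, ⟨x', hx⟩, τ, ⟨y', hy⟩, hi⟩

theorem traces_par_comm (x y : Proc A) : traces (par x y) = traces (par y x) := by
  ext w
  simp only [mem_traces_par]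
  exact ⟨fun ⟨σ, hσ, τ, hτ, hi⟩ => ⟨τ, hτ, σ, hσ, hi.symm⟩,
    fun ⟨σ, hσ, τ, hτ, hi⟩ => ⟨τ, hτ, σ, hσ, hi.symm⟩⟩

theorem pfEquiv_par_comm (x y : Proc A) : PFEquiv (par x y) (par y x) := by
  have key : ∀ x y : Proc A, possibleFutures (par x y) ⊆ possibleFutures (par y x) := by
    rintro x y ⟨w, X⟩ ⟨r, hr, rfl⟩
    obtain ⟨x', y', σ, τ, rfl, hx, hy, hi⟩ := hr.exists_of_par
    exact ⟨par y' x', traceTo_par_of_interleave hi.symm hy hx, traces_par_comm x' y'⟩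
  exact (key x y).antisymm (key y x)

theorem traces_par_of_stuck_left (hx : stuck x) : traces (par x y) = traces y := by
  ext w
  refine ⟨fun hw => ?_, fun ⟨y', hy⟩ => ⟨_, traceTo_parR x hy⟩⟩
  obtain ⟨σ, hσ, τ, hτ, hi⟩ := mem_traces_par.mp hw
  rw [traces_eq_of_stuck hx, Set.mem_singleton_iff] at hσ
  subst hσ
  rwa [hi.eq_of_nil_left]

theorem cons_mem_traces_par (hx : [a] ∈ traces x) (hw : w ∈ traces y) :
    a :: w ∈ traces (par x y) := by
  obtain ⟨⟨x', hx⟩, ⟨y', hy⟩⟩ := And.intro hx hw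
  exact ⟨_, (traceTo_parL y hx).append (traceTo_parR x' hy)⟩

theorem TraceTo.exists_of_par_of_not_mem (hx : ∀ c x', Step x c x' → c = a) (hw : a ∉ w)
    (h : TraceTo (par x y) w r) : ∃ y', r = par x y' ∧ TraceTo y w y' := by
  induction w generalizing y with
  | nil => exact ⟨y, h.eq_of_nil, .refl y⟩
  | cons c w ih =>
    obtain ⟨_, s, t⟩ := traceTo_cons_iff.mp h
    cases s with
    | parL _ s => exact absurd (hx _ _ s ▸ List.mem_cons_self) hw
    | parR _ s =>
      obtain ⟨y', rfl, hy⟩ := ih (fun h => hw (.tail _ h)) t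
      exact ⟨y', rfl, .step s hy⟩

end Parallel

section PossibleFutures

variable {A : Type} {a : A} {x y z r : Proc A} {w : List A}

theorem PFEquiv.symm (h : PFEquiv x y) : PFEquiv y x := Eq.symm h

theorem PFEquiv.trans (h₁ : PFEquiv x y) (h₂ : PFEquiv y z) : PFEquiv x z := Eq.trans h₁ h₂

theorem PFEquiv.exists_traceTo (h : PFEquiv x y) (hr : TraceTo x w r) :
    ∃ r', TraceTo y w r' ∧ traces r = traces r' := by
  obtain ⟨r', hr', he⟩ : (w, traces r) ∈ possibleFutures y := h ▸ ⟨r, hr, rfl⟩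
  exact ⟨r', hr', he⟩

theorem PFEquiv.traces_eq (h : PFEquiv x y) : traces x = traces y := by
  obtain ⟨r', hr', he⟩ := h.exists_traceTo (.refl x)
  rwa [hr'.eq_of_nil] at he

theorem pfEquiv_of_forall_traceTo
    (hxy : ∀ w r, TraceTo x w r → ∃ r', TraceTo y w r' ∧ traces r = traces r')
    (hyx : ∀ w r, TraceTo y w r → ∃ r', TraceTo x w r' ∧ traces r = traces r') :
    PFEquiv x y := by
  ext ⟨w, X⟩
  constructor
  · rintro ⟨r, hr, rfl⟩
    obtain ⟨r', hr', he⟩ := hxy w r hr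
    exact ⟨r', hr', he⟩
  · rintro ⟨r, hr, rfl⟩
    obtain ⟨r', hr', he⟩ := hyx w r hr
    exact ⟨r', hr', he⟩

theorem exists_traceTo_of_maximal (htr : traces x = traces y) (hr : TraceTo x w r)
    (hmax : ∀ σ, w ++ σ ∈ traces x → σ = []) : ∃ r', TraceTo y w r' ∧ traces r = traces r' := by
  obtain ⟨r', hr'⟩ : w ∈ traces y := htr ▸ ⟨r, hr⟩
  refine ⟨r', hr', ?_⟩
  rw [traces_eq_singleton_nil_of_maximal hr hmax,
    traces_eq_singleton_nil_of_maximal hr' (htr ▸ hmax)]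

theorem traces_eq_traces_pre_nil (hx : ∀ c x', Step x c x' → c = a ∧ stuck x')
    (hxa : a ∈ initials x) : traces x = traces (pre a nil) := by
  ext w
  rw [mem_traces_pre_nil]
  cases w with
  | nil => simp [nil_mem_traces]
  | cons c w =>
    simp only [cons_mem_traces_iff, reduceCtorEq, List.cons.injEq, false_or]
    constructor
    · rintro ⟨x', s, hw⟩
      obtain ⟨rfl, hs⟩ := hx c x' s
      exact ⟨rfl, by simpa [traces_eq_of_stuck hs] using hw⟩
    · rintro ⟨rfl, rfl⟩
      obtain ⟨x', s⟩ := hxa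
      exact ⟨x', s, nil_mem_traces x'⟩

theorem exists_traceTo_of_forall_step (hx : ∀ c x', Step x c x' → c = a ∧ stuck x')
    (hy : ∀ c y', Step y c y' → c = a ∧ stuck y') (hxa : a ∈ initials x) (hya : a ∈ initials y)
    (hr : TraceTo x w r) : ∃ r', TraceTo y w r' ∧ traces r = traces r' := by
  cases w with
  | nil =>
    rw [hr.eq_of_nil]
    exact ⟨y, .refl y, by rw [traces_eq_traces_pre_nil hx hxa, traces_eq_traces_pre_nil hy hya]⟩
  | cons c w =>
    obtain ⟨x', s, t⟩ := traceTo_cons_iff.mp hr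
    obtain ⟨rfl, hs⟩ := hx c x' s
    obtain ⟨rfl, rfl⟩ := t.eq_of_stuck hs
    obtain ⟨y', s'⟩ := hya
    exact ⟨y', traceTo_singleton_iff.mpr s',
      by rw [traces_eq_of_stuck hs, traces_eq_of_stuck (hy _ _ s').2]⟩

theorem pfEquiv_of_forall_step (hx : ∀ c x', Step x c x' → c = a ∧ stuck x')
    (hy : ∀ c y', Step y c y' → c = a ∧ stuck y') (hxa : a ∈ initials x) (hya : a ∈ initials y) :
    PFEquiv x y :=
  pfEquiv_of_forall_traceTo (fun _ _ => exists_traceTo_of_forall_step hx hy hxa hya)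
    (fun _ _ => exists_traceTo_of_forall_step hy hx hya hxa)

end PossibleFutures

section Chains

variable {A : Type} {a b c : A} {N k : ℕ} {r : Proc A} {u v w : List A}

theorem mem_traces_bpow : w ∈ traces (bpow a b k) ↔ w <+: List.replicate k b ++ [a] := by
  induction k generalizing w with
  | zero => simp [bpow, mem_traces_pre_nil, List.prefix_cons_iff]
  | succ k ih => simp [bpow, mem_traces_pre, ih, List.replicate_succ, List.prefix_cons_iff]

theorem cons_mem_traces_bpow (hab : a ≠ b) (h : a :: w ∈ traces (bpow a b k)) :
    k = 0 ∧ w = [] := by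
  rw [mem_traces_bpow, List.prefix_concat_iff] at h
  rcases h with h | h
  · cases k with
    | zero => simpa using h
    | succ k => simp only [List.replicate_succ, List.cons_append, List.cons.injEq] at h; exact absurd h.1 hab
  · exact absurd (List.eq_of_mem_replicate (h.subset List.mem_cons_self)) hab

theorem le_of_replicate_mem_traces_bpow (hab : a ≠ b) {n : ℕ}
    (h : List.replicate n b ∈ traces (bpow a b k)) : n ≤ k := by
  rw [mem_traces_bpow, List.prefix_concat_iff] at h
  rcases h with h | h
  · exact absurd (List.eq_of_mem_replicate (h ▸ List.mem_concat_self)) hab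
  · simpa using h.length_le

theorem TraceTo.exists_bpow_of_not_mem (h : TraceTo (bpow a b k) w r) (hw : a ∉ w) :
    ∃ k', r = bpow a b k' := by
  induction w generalizing k with
  | nil => exact ⟨k, h.eq_of_nil⟩
  | cons c w ih =>
    obtain ⟨_, s, t⟩ := traceTo_cons_iff.mp h
    cases k with
    | zero => obtain ⟨rfl, -⟩ := step_pre_iff.mp s; simp at hw
    | succ k =>
      obtain ⟨-, rfl⟩ := step_pre_iff.mp s
      exact ih t fun h => hw (.tail _ h)

theorem step_listSum_iff {l : List (Proc A)} :
    Step (listSum l) c r ↔ ∃ t ∈ l, Step t c r := by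
  induction l with
  | nil => exact ⟨(nomatch ·), by simp⟩
  | cons t l ih =>
    refine ⟨fun h => ?_, fun ⟨t', ht', s⟩ => ?_⟩
    · cases h with
      | addL _ s => exact ⟨t, List.mem_cons_self, s⟩
      | addR _ s => obtain ⟨t', ht', s⟩ := ih.mp s; exact ⟨t', .tail _ ht', s⟩
    · rcases List.mem_cons.mp ht' with rfl | ht'
      · exact .addL _ s
      · exact .addR _ (ih.mpr ⟨t', ht', s⟩)

theorem step_pN (h : Step (pN a b N) c r) : c = b ∧ ∃ m < N, r = bpow a b m := by
  obtain ⟨t, ht, s⟩ := step_listSum_iff.mp h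
  obtain ⟨m, hm, rfl⟩ := List.mem_map.mp ht
  obtain ⟨rfl, rfl⟩ := step_pre_iff.mp s
  exact ⟨rfl, m, List.mem_range.mp hm, rfl⟩

theorem TraceTo.exists_bpow_of_pN (h : TraceTo (pN a b N) w r) (hne : w ≠ []) (hw : a ∉ w) :
    ∃ k, r = bpow a b k := by
  obtain ⟨c, w, rfl⟩ := List.exists_cons_of_ne_nil hne
  obtain ⟨_, s, t⟩ := traceTo_cons_iff.mp h
  obtain ⟨-, m, -, rfl⟩ := step_pN s
  exact t.exists_bpow_of_not_mem fun h => hw (.tail _ h)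

theorem mem_traces_listSum {l : List (Proc A)} :
    w ∈ traces (listSum l) ↔ w = [] ∨ ∃ t ∈ l, w ∈ traces t := by
  cases w with
  | nil => simp [nil_mem_traces]
  | cons c w =>
    simp only [cons_mem_traces_iff, step_listSum_iff, reduceCtorEq, false_or]
    constructor
    · rintro ⟨r, ⟨t, ht, s⟩, hw⟩
      exact ⟨t, ht, r, s, hw⟩
    · rintro ⟨t, ht, r, s, hw⟩
      exact ⟨r, ⟨t, ht, s⟩, hw⟩

theorem mem_traces_pN :
    w ∈ traces (pN a b N) ↔ w = [] ∨ ∃ i < N, w <+: List.replicate (i + 1) b ++ [a] := by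
  simp [pN, mem_traces_listSum, mem_traces_bpow]

theorem replicate_append_mem_traces_pN {i : ℕ} (hi : 0 < i) (hiN : i ≤ N) :
    List.replicate i b ++ [a] ∈ traces (pN a b N) := by
  obtain ⟨j, rfl⟩ := Nat.exists_eq_add_of_lt hi
  exact mem_traces_pN.mpr (.inr ⟨j, by omega, by simp⟩)

theorem eq_nil_of_append_mem_traces_pN (hab : a ≠ b) (ha : a ∈ u)
    (h : u ++ v ∈ traces (pN a b N)) : v = [] := by
  obtain ⟨s, t, rfl⟩ := List.append_of_mem ha
  rcases mem_traces_pN.mp h with h | ⟨i, -, h⟩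
  · simp at h
  rw [List.prefix_concat_iff] at h
  rcases h with h | h
  · rcases List.eq_nil_or_concat v with rfl | ⟨v, d, rfl⟩
    · rfl
    rw [List.concat_eq_append, ← List.append_assoc] at h
    have hmem : a ∈ s ++ a :: t ++ v := by simp
    exact absurd (List.eq_of_mem_replicate (List.append_inj_left' h rfl ▸ hmem)) hab
  · exact absurd (List.eq_of_mem_replicate (h.subset (by simp))) hab

end Chains

section Decomposition

variable {A : Type} {a b c : A} {N k : ℕ} {p q r x y : Proc A} {w σ : List A}

theorem step_pre_nil_eq (h : Step (pre a nil) c y) : c = a :=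
  (step_pre_iff.mp h).1

theorem traces_par_eq_traces_pN_of_step (hab : a ≠ b)
    (h : PFEquiv (par p q) (par (pre a nil) (pN a b N))) (hs : Step p a x) :
    traces (par x q) = traces (pN a b N) := by
  obtain ⟨r, hr, he⟩ := h.exists_traceTo (traceTo_singleton_iff.mpr (.parL q hs))
  have hr : r = par nil (pN a b N) := by
    cases traceTo_singleton_iff.mp hr with
    | parL _ s => rw [(step_pre_iff.mp s).2]
    | parR _ s => exact absurd (step_pN s).1 hab
  rw [he, hr, traces_par_of_stuck_left stuck_nil]

theorem not_mem_of_traces_par_eq_traces_pN (hab : a ≠ b)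
    (h : traces (par x y) = traces (pN a b N)) (hσ : σ ∈ traces x) (hy : ¬ stuck y) : a ∉ σ := by
  intro ha
  obtain ⟨c, y', s⟩ : ∃ c y', Step y c y' := by simpa [stuck] using hy
  obtain ⟨x', hx'⟩ := hσ
  have : σ ++ [c] ∈ traces (par x y) :=
    ⟨_, (traceTo_parL y hx').append (traceTo_singleton_iff.mpr (.parR x' s))⟩
  exact List.cons_ne_nil c [] (eq_nil_of_append_mem_traces_pN hab ha (h ▸ this))

/-- Every trace of `p_N` containing `a` ends in it, but the factor contributing the `a` of the
trace `b a` could be followed by a step of the other factor. -/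
theorem stuck_or_stuck_of_traces_par_eq_traces_pN (hab : a ≠ b) (hN : 1 ≤ N)
    (h : traces (par x y) = traces (pN a b N)) : stuck x ∨ stuck y := by
  by_contra! hxy
  have hba : [b, a] ∈ traces (par x y) := h ▸ replicate_append_mem_traces_pN one_pos hN
  obtain ⟨σ, hσ, τ, hτ, hi⟩ := mem_traces_par.mp hba
  rcases List.mem_append.mp (hi.perm.mem_iff.mpr (by simp : a ∈ [b, a])) with ha | ha
  · exact not_mem_of_traces_par_eq_traces_pN hab h hσ hxy.2 ha
  · exact not_mem_of_traces_par_eq_traces_pN hab ((traces_par_comm y x).trans h) hτ hxy.1 ha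

theorem step_eq_of_pfEquiv_par (hab : a ≠ b)
    (h : PFEquiv (par p q) (par (pre a nil) (pN a b N)))
    (hq : List.replicate N b ∈ traces q) (hs : Step p c x) : c = a := by
  by_contra hc
  obtain ⟨r, hr, he⟩ := h.exists_traceTo (traceTo_singleton_iff.mpr (.parL q hs))
  obtain ⟨y, rfl, hy⟩ := hr.exists_of_par_of_not_mem (fun _ _ => step_pre_nil_eq)
    (by simpa [eq_comm] using hc)
  obtain ⟨-, m, hm, rfl⟩ := step_pN (traceTo_singleton_iff.mp hy)
  obtain ⟨q', hq'⟩ := hq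
  obtain ⟨r', hr'⟩ : List.replicate N b ∈ traces (par (pre a nil) (bpow a b m)) :=
    he ▸ ⟨_, traceTo_parR x hq'⟩
  obtain ⟨y', -, hy'⟩ := hr'.exists_of_par_of_not_mem (fun _ _ => step_pre_nil_eq)
    (fun h => hab (List.eq_of_mem_replicate h))
  exact absurd (le_of_replicate_mem_traces_bpow hab ⟨y', hy'⟩) (by omega)

theorem mem_traces_of_cons_mem_traces_par (hx : traces x = traces (pre a nil))
    (h : a :: w ∈ traces (par x y)) :
    w ∈ traces y ∨ ∃ τ, a :: τ ∈ traces y ∧ ∃ σ ∈ traces x, Interleave σ τ w := by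
  obtain ⟨σ, hσ, τ, hτ, hi⟩ := mem_traces_par.mp h
  cases hi with
  | left _ hi =>
    rw [hx, mem_traces_pre_nil] at hσ
    obtain rfl : _ = [] := by simpa using hσ
    exact .inl (hi.eq_of_nil_left ▸ hτ)
  | right _ hi => exact .inr ⟨_, hτ, σ, hσ, hi⟩

theorem traces_eq_traces_bpow_of_traces_par_eq (hab : a ≠ b) (hx : traces x = traces (pre a nil))
    (h : traces (par x r) = traces (par (pre a nil) (bpow a b k))) :
    traces r = traces (bpow a b k) := by
  have ha : [a] ∈ traces (pre a nil) := mem_traces_pre_nil.mpr (.inr rfl)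
  have hsub : traces r ⊆ traces (bpow a b k) := by
    intro w hw
    rcases mem_traces_of_cons_mem_traces_par rfl (h ▸ cons_mem_traces_par (hx ▸ ha) hw) with
      hw | ⟨τ, hτ, σ, hσ, hi⟩
    · exact hw
    · obtain ⟨rfl, rfl⟩ := cons_mem_traces_bpow hab hτ
      rwa [hi.eq_of_nil_right]
  refine hsub.antisymm fun w hw => mem_traces_of_prefix (mem_traces_bpow.mp hw) ?_
  have hfull := mem_traces_bpow.mpr (List.prefix_refl (List.replicate k b ++ [a]))
  rcases mem_traces_of_cons_mem_traces_par hx (h ▸ cons_mem_traces_par ha hfull) with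
    hw | ⟨τ, hτ, -⟩
  · exact hw
  · obtain ⟨rfl, rfl⟩ := cons_mem_traces_bpow hab (hsub hτ)
    exact hτ

theorem PFEquiv.exists_traceTo_of_par (hx' : ∀ c x₁, Step x' c x₁ → c = a)
    (h : PFEquiv (par x y) (par x' y')) (hw : a ∉ w) (hr : TraceTo y w r) :
    ∃ r', TraceTo y' w r' ∧ traces (par x r) = traces (par x' r') := by
  obtain ⟨s, hs, he⟩ := h.exists_traceTo (traceTo_parR x hr)
  obtain ⟨r', rfl, hr'⟩ := hs.exists_of_par_of_not_mem hx' hw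
  exact ⟨r', hr', he⟩

theorem pfEquiv_pN_of_pfEquiv_par (hab : a ≠ b) (hp : traces p = traces (pre a nil))
    (hps : ∀ c p', Step p c p' → c = a) (hq : traces q = traces (pN a b N))
    (h : PFEquiv (par p q) (par (pre a nil) (pN a b N))) : PFEquiv q (pN a b N) := by
  refine pfEquiv_of_forall_traceTo (fun w r hr => ?_) (fun w r hr => ?_)
  · by_cases ha : a ∈ w
    · exact exists_traceTo_of_maximal hq hr fun σ hσ =>
        eq_nil_of_append_mem_traces_pN hab ha (hq ▸ hσ)
    rcases eq_or_ne w [] with rfl | hne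
    · exact ⟨_, .refl _, hr.eq_of_nil ▸ hq⟩
    obtain ⟨r', hr', he⟩ := h.exists_traceTo_of_par (fun _ _ => step_pre_nil_eq) ha hr
    obtain ⟨k, rfl⟩ := hr'.exists_bpow_of_pN hne ha
    exact ⟨_, hr', traces_eq_traces_bpow_of_traces_par_eq hab hp he⟩
  · by_cases ha : a ∈ w
    · exact exists_traceTo_of_maximal hq.symm hr fun σ hσ =>
        eq_nil_of_append_mem_traces_pN hab ha hσ
    rcases eq_or_ne w [] with rfl | hne
    · exact ⟨_, .refl _, hr.eq_of_nil ▸ hq.symm⟩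
    obtain ⟨k, rfl⟩ := hr.exists_bpow_of_pN hne ha
    obtain ⟨r', hr', he⟩ := h.symm.exists_traceTo_of_par hps ha hr
    exact ⟨_, hr', (traces_eq_traces_bpow_of_traces_par_eq hab hp he.symm).symm⟩

theorem pfEquiv_pre_nil_and_pfEquiv_pN_of_step (hab : a ≠ b) (hN : 1 ≤ N) (hq0 : ¬ NilEquiv q)
    (h : PFEquiv (par p q) (par (pre a nil) (pN a b N))) (hpa : Step p a x) :
    PFEquiv p (pre a nil) ∧ PFEquiv q (pN a b N) := by
  have hres : ∀ {p'}, Step p a p' → traces (par p' q) = traces (pN a b N) :=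
    traces_par_eq_traces_pN_of_step hab h
  have hstuck : ∀ {p'}, Step p a p' → stuck p' := fun hs =>
    (stuck_or_stuck_of_traces_par_eq_traces_pN hab hN (hres hs)).resolve_right
      (mt nilEquiv_of_stuck hq0)
  have hq : traces q = traces (pN a b N) := by
    rw [← hres hpa, traces_par_of_stuck_left (hstuck hpa)]
  have hqN : List.replicate N b ∈ traces q :=
    hq ▸ mem_traces_of_prefix (List.prefix_append _ _) (replicate_append_mem_traces_pN hN le_rfl)
  have hps : ∀ c p', Step p c p' → c = a := fun _ _ => step_eq_of_pfEquiv_par hab h hqN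
  have hp : PFEquiv p (pre a nil) :=
    pfEquiv_of_forall_step (fun c _ hs => ⟨hps c _ hs, hstuck (hps c _ hs ▸ hs)⟩)
      (fun _ _ hs => ⟨step_pre_nil_eq hs, (step_pre_iff.mp hs).2 ▸ stuck_nil⟩)
      ⟨x, hpa⟩ ⟨nil, .pre a nil⟩
  exact ⟨hp, pfEquiv_pN_of_pfEquiv_par hab hp.traces_eq hps hq h⟩

end Decomposition

theorem pf_par_decomposition_general {A : Type}
    (a b : A) (hab : a ≠ b) (N : ℕ) (hN : 1 < N) (p q : Proc A)
    (hp0 : ¬ NilEquiv p) (hq0 : ¬ NilEquiv q)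
    (h : PFEquiv (Proc.par p q) (Proc.par (Proc.pre a Proc.nil) (pN a b N))) :
    (PFEquiv p (Proc.pre a Proc.nil) ∧ PFEquiv q (pN a b N)) ∨
    (PFEquiv p (pN a b N) ∧ PFEquiv q (Proc.pre a Proc.nil)) := by
  obtain ⟨r, hr, -⟩ :=
    h.symm.exists_traceTo (traceTo_singleton_iff.mpr (.parL (pN a b N) (.pre a nil)))
  cases traceTo_singleton_iff.mp hr with
  | parL _ hp => exact .inl (pfEquiv_pre_nil_and_pfEquiv_pN_of_step hab hN.le hq0 h hp)
  | parR _ hq =>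
    exact .inr (pfEquiv_pre_nil_and_pfEquiv_pN_of_step hab hN.le hp0
      ((pfEquiv_par_comm q p).trans h) hq).symm

theorem pf_par_decomposition {A : Type} [Fintype A] [Nonempty A]
    (a b : A) (hab : a ≠ b) (N : ℕ) (hN : 1 < N) (p q : Proc A)
    (hp0 : ¬ NilEquiv p) (hq0 : ¬ NilEquiv q)
    (hp : noNilSummandFactor p) (hq : noNilSummandFactor q)
    (h : PFEquiv (Proc.par p q) (Proc.par (Proc.pre a Proc.nil) (pN a b N))) :
    (PFEquiv p (Proc.pre a Proc.nil) ∧ PFEquiv q (pN a b N)) ∨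
    (PFEquiv p (pN a b N) ∧ PFEquiv q (Proc.pre a Proc.nil)) :=
  pf_par_decomposition_general a b hab N hN p q hp0 hq0 h
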